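/- Let G be a graph on [n] that has the interval property with respect to its labeling, let H = in_lex(G), and let M = {x_{i_1}, y_{j_1}}, …, {x_{i_m}, y_{j_m}} be an induced matching of H with i_1 < ⋯ < i_m satisfying condition (∗). Suppose for some index s with 1 ≤ s ≤ m−1 that {i_s, i_{s+1}} is not an edge of G but {j_s, i_{s+1}} is an edge of G. Then M together with the additional edge {x_{j_s}, y_{i_{s+1}}} is an induced matching of H of cardinality m+1. -/

import Mathlib

open SimpleGraph

/-- `G` has the interval property with respect to its labeling: for every edge `{i,j}`
with `i < j`, every pair `{k,l}` with `i ≤ k < l ≤ j` is an edge of `G`. -/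
def HasIntervalProperty {n : ℕ} (G : SimpleGraph (Fin n)) : Prop :=
  ∀ i j k l : Fin n, G.Adj i j → i < j → i ≤ k → k < l → l ≤ j → G.Adj k l

/-- The bipartite graph `in_lex(G)` on `{x_1,…,x_n} ∪ {y_1,…,y_n}` (here `Sum.inl i = x_i`,
`Sum.inr j = y_j`) whose edges are the pairs `{x_i, y_j}` with `i < j` and `{i,j} ∈ E(G)`. -/
def inLex {n : ℕ} (G : SimpleGraph (Fin n)) : SimpleGraph (Fin n ⊕ Fin n) :=
  SimpleGraph.fromRel (fun u v =>
    ∃ i j : Fin n, i < j ∧ G.Adj i j ∧ u = Sum.inl i ∧ v = Sum.inr j)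

/-- `M` is an induced matching of `H`: a set of edges of `H`, pairwise vertex-disjoint,
such that no edge of `H` joins two vertices lying in distinct edges of `M`. -/
def IsInducedMatching {V : Type*} (H : SimpleGraph V) (M : Set (Sym2 V)) : Prop :=
  M ⊆ H.edgeSet ∧
  (∀ e ∈ M, ∀ f ∈ M, e ≠ f → ∀ v, v ∈ e → v ∉ f) ∧
  (∀ e ∈ M, ∀ f ∈ M, e ≠ f → ∀ u ∈ e, ∀ v ∈ f, ¬ H.Adj u v)

/-- An indexed family of `m` pairwise distinct edges forming an induced matching of `H`. -/
def IsInducedMatchingFamily {V : Type*} (H : SimpleGraph V) {m : ℕ} (f : Fin m → Sym2 V) : Prop :=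
  Function.Injective f ∧ IsInducedMatching H (Set.range f)

/-- `p` is an induced path of length `l` in `G`: `l+1` distinct vertices such that the edges
of `G` among them are exactly the consecutive pairs. -/
def IsInducedPath {V : Type*} (G : SimpleGraph V) (l : ℕ) (p : Fin (l + 1) → V) : Prop :=
  Function.Injective p ∧
  ∀ a b : Fin (l + 1), G.Adj (p a) (p b) ↔ ((a : ℕ) + 1 = b ∨ (b : ℕ) + 1 = a)

/-- `c` is an induced cycle of length `k` in `H`: `k` distinct vertices such that the edges
of `H` among them are exactly the consecutive pairs (cyclically). -/
def IsInducedCycle {V : Type*} (H : SimpleGraph V) (k : ℕ) (c : Fin k → V) : Prop :=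
  3 ≤ k ∧ Function.Injective c ∧
  ∀ a b : Fin k, H.Adj (c a) (c b) ↔ (((a : ℕ) + 1) % k = b ∨ ((b : ℕ) + 1) % k = a)

/-- Condition (∗) for an induced matching `{x_{i t}, y_{j t}}` of `in_lex(G)`: for every
index `a` and vertex `t < i a` with `{t, j a} ∈ E(G)`, replacing `x_{i a}` by `x_t`
does not yield an induced matching of `in_lex(G)`. -/
def CondStar {n m : ℕ} (G : SimpleGraph (Fin n)) (i j : Fin m → Fin n) : Prop :=
  ∀ a : Fin m, ∀ t : Fin n, t < i a → G.Adj t (j a) →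
    ¬ IsInducedMatchingFamily (inLex G)
        (fun u => if u = a then s(Sum.inl t, Sum.inr (j u))
                  else s(Sum.inl (i u), Sum.inr (j u)))

/-! In `inLex G` an edge `x_p y_q` needs `p < q`, so an induced matching `{x_{i t}, y_{j t}}`
is a family of `G`-edges `i t < j t` with no edge `{i u, j v}`, `u ≠ v`, `i u < j v`. The interval
property forces `j u ≤ i v` whenever `u < v`: the intervals `[i t, j t]` are laid out from left
to right, and the new edge `{j a, i b}` fits into the gap between the `a`-th and `b`-th ones.
The only real check is that `x_{j a}` sees no `y_{j t}`. Such a `t` lies beyond `b`, and by the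
interval property `j a` is adjacent to `j t` for at most one `t` to its right; hence replacing
`x_{i t}` by `x_{j a}` would give an induced matching, contradicting (∗). -/

open Function

variable {n : ℕ} {G : SimpleGraph (Fin n)}

lemma HasIntervalProperty.adj_of_le_of_lt (hG : HasIntervalProperty G) {p q r : Fin n}
    (hadj : G.Adj p q) (hpr : p ≤ r) (hrq : r < q) : G.Adj r q :=
  hG p q r q hadj (hpr.trans_lt hrq) hpr hrq le_rfl

lemma HasIntervalProperty.not_adj_of_covBy {ι : Type*} [LinearOrder ι] {i : ι → Fin n}
    (hG : HasIntervalProperty G) (hi : StrictMono i) {a b : ι} (hab : a ⋖ b)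
    (hnadj : ¬ G.Adj (i a) (i b)) (t : ι) (ht : i t < i b) : ¬ G.Adj (i t) (i b) :=
  fun hadj => hnadj (hG.adj_of_le_of_lt hadj (hi.monotone (hab.le_of_lt (hi.lt_iff_lt.1 ht)))
    (hi hab.lt))

lemma inLex_adj_inl_inr {p q : Fin n} :
    (inLex G).Adj (Sum.inl p) (Sum.inr q) ↔ p < q ∧ G.Adj p q := by
  simp [inLex]

lemma inLex_not_adj_inl_inl {p q : Fin n} : ¬ (inLex G).Adj (Sum.inl p) (Sum.inl q) := by
  simp [inLex]

lemma inLex_not_adj_inr_inr {p q : Fin n} : ¬ (inLex G).Adj (Sum.inr p) (Sum.inr q) := by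
  simp [inLex]

lemma Sym2.mk_inl_inr_eq_iff {α β : Type*} {p p' : α} {q q' : β} :
    s(Sum.inl p, Sum.inr q) = s(Sum.inl p', Sum.inr q') ↔ p = p' ∧ q = q' := by
  simp

structure IsInLexMatching {ι : Type*} (G : SimpleGraph (Fin n)) (i j : ι → Fin n) : Prop where
  injective_left : Injective i
  injective_right : Injective j
  lt : ∀ t, i t < j t
  adj : ∀ t, G.Adj (i t) (j t)
  not_adj : ∀ ⦃u v⦄, u ≠ v → i u < j v → ¬ G.Adj (i u) (j v)

namespace IsInLexMatching

section Basic

variable {ι : Type*} {i j : ι → Fin n}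

lemma injective_sym2 (h : IsInLexMatching G i j) :
    Injective fun t => s(Sum.inl (i t), Sum.inr (j t)) :=
  fun _ _ huv => h.injective_left (Sym2.mk_inl_inr_eq_iff.1 huv).1

lemma isInducedMatching (h : IsInLexMatching G i j) :
    IsInducedMatching (inLex G) (Set.range fun t => s(Sum.inl (i t), Sum.inr (j t))) := by
  refine ⟨?_, ?_, ?_⟩
  · rintro _ ⟨t, rfl⟩
    exact inLex_adj_inl_inr.2 ⟨h.lt t, h.adj t⟩
  · rintro _ ⟨u, rfl⟩ _ ⟨v, rfl⟩ huv w hw hw'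
    have huv : u ≠ v := by rintro rfl; exact huv rfl
    simp only [Sym2.mem_iff] at hw hw'
    rcases hw with rfl | rfl <;> rcases hw' with h' | h' <;> simp only [reduceCtorEq,
      Sum.inl.injEq, Sum.inr.injEq] at h'
    · exact huv (h.injective_left h')
    · exact huv (h.injective_right h')
  · rintro _ ⟨u, rfl⟩ _ ⟨v, rfl⟩ huv w hw w' hw' hadj
    have huv : u ≠ v := by rintro rfl; exact huv rfl
    simp only [Sym2.mem_iff] at hw hw'
    rcases hw with rfl | rfl <;> rcases hw' with rfl | rfl
    · exact inLex_not_adj_inl_inl hadj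
    · obtain ⟨hlt, hadj⟩ := inLex_adj_inl_inr.1 hadj
      exact h.not_adj huv hlt hadj
    · obtain ⟨hlt, hadj⟩ := inLex_adj_inl_inr.1 hadj.symm
      exact h.not_adj huv.symm hlt hadj
    · exact inLex_not_adj_inr_inr hadj

lemma isInducedMatchingFamily {m : ℕ} {i j : Fin m → Fin n} (h : IsInLexMatching G i j) :
    IsInducedMatchingFamily (inLex G) (fun t => s(Sum.inl (i t), Sum.inr (j t))) :=
  ⟨h.injective_sym2, h.isInducedMatching⟩

lemma of_isInducedMatching (hi : Injective i)
    (h : IsInducedMatching (inLex G) (Set.range fun t => s(Sum.inl (i t), Sum.inr (j t)))) :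
    IsInLexMatching G i j := by
  obtain ⟨hsub, hdisj, hind⟩ := h
  have hne : ∀ ⦃u v⦄, u ≠ v →
      s(Sum.inl (i u), Sum.inr (j u)) ≠ s(Sum.inl (i v), Sum.inr (j v)) :=
    fun _ _ huv he => huv (hi (Sym2.mk_inl_inr_eq_iff.1 he).1)
  have hedge : ∀ t, i t < j t ∧ G.Adj (i t) (j t) :=
    fun t => inLex_adj_inl_inr.1 (hsub ⟨t, rfl⟩)
  refine ⟨hi, fun u v huv => ?_, fun t => (hedge t).1, fun t => (hedge t).2,
    fun u v huv hlt hadj => ?_⟩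
  · by_contra hne'
    exact hdisj _ ⟨u, rfl⟩ _ ⟨v, rfl⟩ (hne hne') _ (Sym2.mem_mk_right _ _)
      (huv ▸ Sym2.mem_mk_right _ _)
  · exact hind _ ⟨u, rfl⟩ _ ⟨v, rfl⟩ (hne huv) _ (Sym2.mem_mk_left _ _) _
      (Sym2.mem_mk_right _ _) (inLex_adj_inl_inr.2 ⟨hlt, hadj⟩)

lemma update [DecidableEq ι] (h : IsInLexMatching G i j) {t : ι} {w : Fin n}
    (hw : ∀ s, s ≠ t → w ≠ i s) (hlt : w < j t) (hadj : G.Adj w (j t))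
    (hnot : ∀ v, v ≠ t → w < j v → ¬ G.Adj w (j v)) :
    IsInLexMatching G (update i t w) j where
  injective_left u v huv := by
    by_cases hu : u = t <;> by_cases hv : v = t <;> simp only [update_apply, hu, hv,
      if_true, if_false] at huv
    · exact hu.trans hv.symm
    · exact absurd huv (hw v hv)
    · exact absurd huv.symm (hw u hu)
    · exact h.injective_left huv
  injective_right := h.injective_right
  lt u := by
    rcases eq_or_ne u t with rfl | hu
    · simpa using hlt
    · simpa [hu] using h.lt u
  adj u := by
    rcases eq_or_ne u t with rfl | hu
    · simpa using hadj
    · simpa [hu] using h.adj u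
  not_adj u v huv := by
    rcases eq_or_ne u t with rfl | hu
    · simpa using hnot v huv.symm
    · simpa [hu] using h.not_adj huv

lemma optionElim (h : IsInLexMatching G i j) {p q : Fin n} (hp : ∀ t, p ≠ i t)
    (hq : ∀ t, q ≠ j t) (hpq : p < q) (hadj : G.Adj p q)
    (hp' : ∀ t, p < j t → ¬ G.Adj p (j t)) (hq' : ∀ t, i t < q → ¬ G.Adj (i t) q) :
    IsInLexMatching G (fun o : Option ι => o.elim p i) (fun o => o.elim q j) where
  injective_left := by
    rintro (_ | u) (_ | v) huv
    exacts [rfl, absurd huv (hp v), absurd huv.symm (hp u), congrArg some (h.injective_left huv)]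
  injective_right := by
    rintro (_ | u) (_ | v) huv
    exacts [rfl, absurd huv (hq v), absurd huv.symm (hq u), congrArg some (h.injective_right huv)]
  lt := by
    rintro (_ | u)
    exacts [hpq, h.lt u]
  adj := by
    rintro (_ | u)
    exacts [hadj, h.adj u]
  not_adj := by
    rintro (_ | u) (_ | v) huv
    exacts [absurd rfl huv, hp' v, hq' u, h.not_adj (by simpa using huv)]

end Basic

section Order

variable {ι : Type*} [LinearOrder ι] {i j : ι → Fin n}

lemma right_le_left_of_lt (h : IsInLexMatching G i j) (hG : HasIntervalProperty G)
    (hi : StrictMono i) {u v : ι} (huv : u < v) : j u ≤ i v := by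
  by_contra! hlt
  exact h.not_adj huv.ne' hlt (hG.adj_of_le_of_lt (h.adj u) (hi huv).le hlt)

lemma strictMono_right (h : IsInLexMatching G i j) (hG : HasIntervalProperty G)
    (hi : StrictMono i) : StrictMono j :=
  fun _ v huv => (h.right_le_left_of_lt hG hi huv).trans_lt (h.lt v)

lemma not_adj_of_le_left (h : IsInLexMatching G i j) (hG : HasIntervalProperty G)
    (hi : StrictMono i) {p q : ι} {w : Fin n} (hpq : p < q) (hw : w ≤ i p) :
    ¬ G.Adj w (j q) := fun hadj =>
  have hlt : i p < j q := (hi hpq).trans (h.lt q)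
  h.not_adj hpq.ne hlt (hG.adj_of_le_of_lt hadj hw hlt)

lemma eq_of_adj_of_adj (h : IsInLexMatching G i j) (hG : HasIntervalProperty G)
    (hi : StrictMono i) {p q : ι} {w : Fin n} (hp : w ≤ i p) (hq : w ≤ i q)
    (hadjp : G.Adj w (j p)) (hadjq : G.Adj w (j q)) : p = q := by
  rcases lt_trichotomy p q with hpq | rfl | hpq
  · exact absurd hadjq (h.not_adj_of_le_left hG hi hpq hp)
  · rfl
  · exact absurd hadjp (h.not_adj_of_le_left hG hi hpq hq)

section Consecutive

variable {a b : ι}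

lemma right_lt_left_of_covBy (h : IsInLexMatching G i j) (hG : HasIntervalProperty G)
    (hi : StrictMono i) (hab : a ⋖ b) (hadj : G.Adj (j a) (i b)) : j a < i b :=
  (h.right_le_left_of_lt hG hi hab.lt).lt_of_ne hadj.ne

lemma right_ne_left (h : IsInLexMatching G i j) (hi : StrictMono i) (hab : a ⋖ b)
    (hlt : j a < i b) (s : ι) : j a ≠ i s := by
  intro hs
  rcases le_or_gt s a with hsa | has
  · have := hi.monotone hsa
    have := h.lt a
    order
  · have := hi.monotone (hab.ge_of_gt has)
    order

lemma left_ne_right (h : IsInLexMatching G i j) (hG : HasIntervalProperty G)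
    (hi : StrictMono i) (hab : a ⋖ b) (hlt : j a < i b) (s : ι) : i b ≠ j s := by
  intro hs
  rcases le_or_gt s a with hsa | has
  · have := (h.strictMono_right hG hi).monotone hsa
    order
  · have := hi.monotone (hab.ge_of_gt has)
    have := h.lt s
    order

end Consecutive

end Order

lemma not_adj_right_of_condStar {m : ℕ} {i j : Fin m → Fin n} (h : IsInLexMatching G i j)
    (hG : HasIntervalProperty G) (hi : StrictMono i) (hstar : CondStar G i j) {a b : Fin m}
    (hab : a ⋖ b) (hlt : j a < i b) (t : Fin m) (ht : j a < j t) : ¬ G.Adj (j a) (j t) := by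
  have hleft : ∀ v, j a < j v → j a < i v := fun v hv =>
    hlt.trans_le (hi.monotone (hab.ge_of_gt ((h.strictMono_right hG hi).lt_iff_lt.1 hv)))
  intro hadj
  refine hstar t (j a) (hleft t ht) hadj ?_
  have hupd := h.update (fun s _ => h.right_ne_left hi hab hlt s) ht hadj
    fun v hvt hv hadjv => hvt (h.eq_of_adj_of_adj hG hi (hleft v hv).le (hleft t ht).le hadjv hadj)
  convert hupd.isInducedMatchingFamily using 2 with u
  split_ifs with hu <;> simp [hu]

end IsInLexMatching

/-- Case (a) in the proof of Proposition 2.4: if `M` is an induced matching of `in_lex(G)`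
satisfying (∗), `{i_a, i_b} ∉ E(G)` and `{j_a, i_b} ∈ E(G)` for consecutive indices
`a, b`, then `M ∪ {{x_{j_a}, y_{i_b}}}` is an induced matching of cardinality `m + 1`. -/
theorem stmt_10 {n m : ℕ} (G : SimpleGraph (Fin n)) (hG : HasIntervalProperty G)
    (i j : Fin m → Fin n) (hmono : StrictMono i)
    (hM : IsInducedMatchingFamily (inLex G)
      (fun t => s(Sum.inl (i t), Sum.inr (j t))))
    (hstar : CondStar G i j)
    (a b : Fin m) (hab : (a : ℕ) + 1 = b)
    (h1 : ¬ G.Adj (i a) (i b)) (h2 : G.Adj (j a) (i b)) :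
    IsInducedMatching (inLex G)
      (Set.range (fun t => s(Sum.inl (i t), Sum.inr (j t))) ∪
        {s(Sum.inl (j a), Sum.inr (i b))}) ∧
    (Set.range (fun t => s(Sum.inl (i t), Sum.inr (j t))) ∪
        {s(Sum.inl (j a), Sum.inr (i b))}).ncard = m + 1 := by
  have hM := IsInLexMatching.of_isInducedMatching hmono.injective hM.2
  have hcov : a ⋖ b := ⟨Fin.lt_def.2 (by omega), fun c hac hcb => by
    rw [Fin.lt_def] at hac hcb; omega⟩
  have hlt := hM.right_lt_left_of_covBy hG hmono hcov h2
  have hext := hM.optionElim (hM.right_ne_left hmono hcov hlt)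
    (hM.left_ne_right hG hmono hcov hlt) hlt h2
    (hM.not_adj_right_of_condStar hG hmono hstar hcov hlt)
    (hG.not_adj_of_covBy hmono hcov h1)
  have hrange : Set.range (fun t => s(Sum.inl (i t), Sum.inr (j t))) ∪
      {s(Sum.inl (j a), Sum.inr (i b))} = Set.range fun o : Option (Fin m) =>
        s(Sum.inl (o.elim (j a) i), Sum.inr (o.elim (i b) j)) := by
    rw [Option.range_eq, Set.union_singleton]
    rfl
  rw [hrange, Set.ncard_range_of_injective hext.injective_sym2]
  exact ⟨hext.isInducedMatching, by simp⟩
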